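/- Let c ≥ 1 be a natural number and let w be a Gauss word of length 2c satisfying the Gauss parity condition: for every letter i, its two positions have opposite parity (one even index, one odd index). Then there exist exactly two assignments x whose pass type at each position depends only on the parity of the position (i.e., whose over/under passes alternate around the circle). These two assignments are pointwise negations of each other, their warping degree sequences have the alternating forms (k, k+1, k, k+1, …, k+1) and (l, l−1, l, l−1, …, l−1) respectively, and k + l = c. This is property (iv) of the warping matrix: the warping matrix contains exactly two alternating rows, corresponding to the two alternating diagrams obtained from the projection. -/

import Mathlib

namespace Warping

/-- A Gauss word of length `2c`: every letter occurs at exactly two positions. -/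
def IsGaussWord (c : ℕ) (w : Fin (2*c) → Fin c) : Prop :=
  ∀ i : Fin c, (Finset.univ.filter (fun j => w j = i)).card = 2

/-- The cyclic successor of an index. -/
def next {n : ℕ} (b : Fin n) : Fin n :=
  ⟨((b : ℕ) + 1) % n, Nat.mod_lt _ (Nat.lt_of_le_of_lt (Nat.zero_le _) b.isLt)⟩

/-- `j` is the first (smaller) of the two positions of its letter. -/
def isFirst (c : ℕ) (w : Fin (2*c) → Fin c) (j : Fin (2*c)) : Prop :=
  ∀ j' : Fin (2*c), w j' = w j → j ≤ j'

/-- Under the assignment `x`, position `j` is passed under. -/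
def passedUnder (c : ℕ) (w : Fin (2*c) → Fin c) (x : Fin c → Bool) (j : Fin (2*c)) : Prop :=
  (x (w j) = true) ↔ isFirst c w j

/-- Time at which position `j` is met in the cyclic traversal starting at base `b`. -/
def time (c : ℕ) (b j : Fin (2*c)) : ℕ := ((j : ℕ) + 2*c - (b : ℕ)) % (2*c)

/-- The letter `i` is a warping crossing for assignment `x` and base `b`: the position of `i`
met earlier in the cyclic traversal starting at `b` is passed under. -/
def IsWarpingCrossing (c : ℕ) (w : Fin (2*c) → Fin c) (x : Fin c → Bool)
    (b : Fin (2*c)) (i : Fin c) : Prop :=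
  ∃ j : Fin (2*c), w j = i ∧ (∀ j' : Fin (2*c), w j' = i → time c b j ≤ time c b j') ∧
    passedUnder c w x j

open scoped Classical in
/-- The warping degree of the assignment `x` with base point `b`. -/
noncomputable def warpingDegree (c : ℕ) (w : Fin (2*c) → Fin c) (x : Fin c → Bool)
    (b : Fin (2*c)) : ℕ :=
  (Finset.univ.filter (fun i => IsWarpingCrossing c w x b i)).card

/-- The step `d_{b+1}(x) - d_b(x)` of the warping degree sequence. -/
noncomputable def step (c : ℕ) (w : Fin (2*c) → Fin c) (x : Fin c → Bool) (b : Fin (2*c)) : ℤ :=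
  (warpingDegree c w x (next b) : ℤ) - (warpingDegree c w x b : ℤ)

/-- An assignment whose pass type at each position depends only on the parity of the
position, i.e. an alternating diagram. -/
def AltAssign (c : ℕ) (w : Fin (2*c) → Fin c) (x : Fin c → Bool) : Prop :=
  ∀ j j' : Fin (2*c), (j : ℕ) % 2 = (j' : ℕ) % 2 →
    (passedUnder c w x j ↔ passedUnder c w x j')

/-! Along the traversal from base `b`, moving the base to `next b` changes only whether the
letter `w b` is a warping crossing: its earlier position was `b`, and becomes the other
occurrence of `w b`, whose pass type is the opposite one. So each step of the warping degree
sequence is `-1` or `+1` according as `b` is passed under or over. For an alternating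
assignment these steps alternate, and negating the assignment swaps crossings with
non-crossings at every base, which gives `k + l = c`. The Gauss parity condition is exactly
what makes the alternating pass pattern consistent with the requirement that the two
occurrences of a letter have opposite pass types. -/

lemma time_eq_ite {c : ℕ} (b j : Fin (2*c)) :
    time c b j = if (b : ℕ) ≤ j then (j : ℕ) - b else (j : ℕ) + 2*c - b := by
  have hj := j.isLt
  unfold time
  split_ifs
  · rw [show (j : ℕ) + 2*c - b = ((j : ℕ) - b) + 2*c by omega, Nat.add_mod_right,
      Nat.mod_eq_of_lt (by omega)]
  · exact Nat.mod_eq_of_lt (by omega)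

lemma next_val {n : ℕ} (b : Fin n) :
    ((next b : Fin n) : ℕ) = if (b : ℕ) + 1 = n then 0 else (b : ℕ) + 1 := by
  have hb := b.isLt
  show ((b : ℕ) + 1) % n = _
  split_ifs with h
  · rw [h, Nat.mod_self]
  · exact Nat.mod_eq_of_lt (by omega)

lemma time_lt {c : ℕ} (b j : Fin (2*c)) : time c b j < 2*c := by
  have hj := j.isLt
  rw [time_eq_ite]
  split_ifs <;> omega

lemma time_self {c : ℕ} (b : Fin (2*c)) : time c b b = 0 := by
  simp [time_eq_ite]

lemma time_injective {c : ℕ} (b : Fin (2*c)) : Function.Injective (time c b) := by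
  intro j j' h
  have hj := j.isLt
  have hj' := j'.isLt
  rw [time_eq_ite, time_eq_ite] at h
  ext
  split_ifs at h <;> omega

lemma time_next_add_one {c : ℕ} {b j : Fin (2*c)} (hj : j ≠ b) :
    time c (next b) j + 1 = time c b j := by
  have hb := b.isLt
  have hj' : (j : ℕ) ≠ b := Fin.val_ne_of_ne hj
  rw [time_eq_ite, time_eq_ite, next_val]
  split_ifs <;> omega

lemma time_next_self {c : ℕ} (b : Fin (2*c)) : time c (next b) b = 2*c - 1 := by
  have hb := b.isLt
  rw [time_eq_ite, next_val]
  split_ifs <;> omega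

lemma eq_add_mod_two_of_sub_eq {n : ℕ} (f : Fin n → ℤ)
    (hf : ∀ b : Fin n, f (next b) - f b = if (b : ℕ) % 2 = 1 then -1 else 1) (b : Fin n) :
    f b = f ⟨0, b.pos⟩ + (b : ℕ) % 2 := by
  obtain ⟨m, hm⟩ := b
  induction m with
  | zero => simp
  | succ m ih =>
    have hstep := hf ⟨m, by omega⟩
    rw [show next (⟨m, by omega⟩ : Fin n) = ⟨m + 1, hm⟩ from Fin.ext (Nat.mod_eq_of_lt hm)]
      at hstep
    have := ih (by omega)
    simp only at hstep this ⊢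
    split_ifs at hstep <;> omega

section GaussWord

variable {c : ℕ} {w : Fin (2*c) → Fin c}

lemma IsGaussWord.surjective (hw : IsGaussWord c w) : Function.Surjective w := by
  intro i
  obtain ⟨j, hj⟩ := Finset.card_pos.mp (by rw [hw i]; norm_num :
    0 < (Finset.univ.filter fun j => w j = i).card)
  exact ⟨j, (Finset.mem_filter.mp hj).2⟩

lemma IsGaussWord.exists_ne (hw : IsGaussWord c w) (j : Fin (2*c)) :
    ∃ j', j' ≠ j ∧ w j' = w j := by
  obtain ⟨j', hj', hne⟩ :=
    Finset.exists_mem_ne (s := Finset.univ.filter fun q => w q = w j) (by rw [hw]; norm_num) j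
  exact ⟨j', hne, (Finset.mem_filter.mp hj').2⟩

lemma IsGaussWord.eq_or_eq (hw : IsGaussWord c w) {j j' q : Fin (2*c)} (hne : j ≠ j')
    (hjj' : w j = w j') (hq : w q = w j) : q = j ∨ q = j' := by
  have hpair : ({j, j'} : Finset _) = Finset.univ.filter fun p => w p = w j := by
    refine Finset.eq_of_subset_of_card_le (fun p hp => ?_) (by rw [hw, Finset.card_pair hne])
    simp only [Finset.mem_insert, Finset.mem_singleton] at hp
    rcases hp with rfl | rfl <;> simp [hjj']
  have hqmem : q ∈ Finset.univ.filter fun p => w p = w j := by simp [hq]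
  simpa [← hpair] using hqmem

lemma IsGaussWord.isFirst_iff_not (hw : IsGaussWord c w) {j j' : Fin (2*c)} (hne : j ≠ j')
    (hjj' : w j = w j') : isFirst c w j ↔ ¬ isFirst c w j' := by
  refine ⟨fun hj hj' => hne (le_antisymm (hj j' hjj'.symm) (hj' j hjj')), fun hj' q hq => ?_⟩
  simp only [isFirst, not_forall, not_le] at hj'
  obtain ⟨p, hp, hpj'⟩ := hj'
  have hpj : p = j := (hw.eq_or_eq hne hjj' (hp.trans hjj'.symm)).resolve_right hpj'.ne
  rcases hw.eq_or_eq hne hjj' hq with rfl | rfl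
  · exact le_rfl
  · exact hpj ▸ hpj'.le

lemma IsGaussWord.passedUnder_iff_not (hw : IsGaussWord c w) (x : Fin c → Bool)
    {j j' : Fin (2*c)} (hne : j ≠ j') (hjj' : w j = w j') :
    passedUnder c w x j ↔ ¬ passedUnder c w x j' := by
  unfold passedUnder
  rw [hw.isFirst_iff_not hne hjj', hjj']
  tauto

lemma passedUnder_not (x : Fin c → Bool) (j : Fin (2*c)) :
    passedUnder c w (fun i => !x i) j ↔ ¬ passedUnder c w x j := by
  unfold passedUnder
  cases h : x (w j) <;> simp [h]

lemma eq_of_passedUnder_iff (hsurj : Function.Surjective w) {x y : Fin c → Bool}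
    (h : ∀ j, passedUnder c w x j ↔ passedUnder c w y j) : x = y := by
  funext i
  obtain ⟨j, rfl⟩ := hsurj i
  have hj := h j
  unfold passedUnder at hj
  exact Bool.eq_iff_iff.mpr (by tauto)

lemma IsGaussWord.exists_passedUnder_iff (hw : IsGaussWord c w) (P : Fin (2*c) → Prop)
    (hP : ∀ j j', j ≠ j' → w j = w j' → (P j ↔ ¬ P j')) :
    ∃ x : Fin c → Bool, ∀ j, passedUnder c w x j ↔ P j := by
  classical
  refine ⟨fun i => decide (∃ j, w j = i ∧ (P j ↔ isFirst c w j)), fun j => ?_⟩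
  have hletter : (∃ q, w q = w j ∧ (P q ↔ isFirst c w q)) ↔ (P j ↔ isFirst c w j) := by
    refine ⟨fun ⟨q, hq, hPq⟩ => ?_, fun h => ⟨j, rfl, h⟩⟩
    by_cases hqj : q = j
    · exact hqj ▸ hPq
    · rw [hP q j hqj hq, hw.isFirst_iff_not hqj hq] at hPq
      tauto
  unfold passedUnder
  rw [decide_eq_true_iff, hletter]
  tauto

lemma IsGaussWord.passedUnder_iff_of_altAssign (hw : IsGaussWord c w)
    (hpar : ∀ j j' : Fin (2*c), j ≠ j' → w j = w j' → (j : ℕ) % 2 ≠ (j' : ℕ) % 2)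
    {x : Fin c → Bool} (hx : AltAssign c w x) (j₀ j : Fin (2*c)) :
    passedUnder c w x j ↔ (passedUnder c w x j₀ ↔ (j : ℕ) % 2 = (j₀ : ℕ) % 2) := by
  by_cases hj : (j : ℕ) % 2 = (j₀ : ℕ) % 2
  · simp only [hj, iff_true, hx j j₀ hj]
  · obtain ⟨p, hp, hwp⟩ := hw.exists_ne j₀
    have hpj : (j : ℕ) % 2 = (p : ℕ) % 2 := by
      have := hpar p j₀ hp hwp
      omega
    rw [hx j p hpj, hw.passedUnder_iff_not x hp hwp]
    simp only [hj, iff_false]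

lemma isWarpingCrossing_iff_of_time_le {x : Fin c → Bool} {b j : Fin (2*c)} {i : Fin c}
    (hj : w j = i) (hmin : ∀ j', w j' = i → time c b j ≤ time c b j') :
    IsWarpingCrossing c w x b i ↔ passedUnder c w x j := by
  refine ⟨fun ⟨q, hq, hqmin, hpu⟩ => ?_, fun h => ⟨j, hj, hmin, h⟩⟩
  rwa [time_injective b (le_antisymm (hqmin j hj) (hmin q hq))] at hpu

lemma isWarpingCrossing_self (x : Fin c → Bool) (b : Fin (2*c)) :
    IsWarpingCrossing c w x b (w b) ↔ passedUnder c w x b :=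
  isWarpingCrossing_iff_of_time_le rfl fun _ _ => by rw [time_self]; exact Nat.zero_le _

lemma IsGaussWord.isWarpingCrossing_next_self (hw : IsGaussWord c w) (x : Fin c → Bool)
    {b j : Fin (2*c)} (hne : j ≠ b) (hj : w j = w b) :
    IsWarpingCrossing c w x (next b) (w b) ↔ passedUnder c w x j := by
  refine isWarpingCrossing_iff_of_time_le hj fun q hq => ?_
  rcases hw.eq_or_eq hne hj (hq.trans hj.symm) with rfl | rfl
  · exact le_rfl
  · rw [time_next_self]
    have := time_lt (next q) j
    omega

lemma isWarpingCrossing_next_of_ne (x : Fin c → Bool) {b : Fin (2*c)} {i : Fin c}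
    (h : w b ≠ i) : IsWarpingCrossing c w x (next b) i ↔ IsWarpingCrossing c w x b i := by
  have hshift : ∀ j, w j = i → time c (next b) j + 1 = time c b j :=
    fun j hj => time_next_add_one (by rintro rfl; exact h hj)
  unfold IsWarpingCrossing
  refine exists_congr fun j => and_congr_right fun hj => and_congr_left fun _ =>
    forall_congr' fun j' => imp_congr_right fun hj' => ?_
  have := hshift j hj
  have := hshift j' hj'
  omega

lemma IsGaussWord.isWarpingCrossing_not_iff (hw : IsGaussWord c w) (x : Fin c → Bool)
    (b : Fin (2*c)) (i : Fin c) :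
    IsWarpingCrossing c w (fun i => !x i) b i ↔ ¬ IsWarpingCrossing c w x b i := by
  obtain ⟨j, hj, hmin⟩ := (Finset.univ.filter fun j => w j = i).exists_min_image (time c b)
    (by rw [← Finset.card_pos, hw i]; norm_num)
  simp only [Finset.mem_filter, Finset.mem_univ, true_and] at hj hmin
  rw [isWarpingCrossing_iff_of_time_le hj hmin, isWarpingCrossing_iff_of_time_le hj hmin,
    passedUnder_not]

lemma IsGaussWord.warpingDegree_add_warpingDegree_not (hw : IsGaussWord c w)
    (x : Fin c → Bool) (b : Fin (2*c)) :
    warpingDegree c w x b + warpingDegree c w (fun i => !x i) b = c := by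
  classical
  unfold warpingDegree
  simp_rw [hw.isWarpingCrossing_not_iff]
  rw [Finset.card_filter_add_card_filter_not, Finset.card_univ, Fintype.card_fin]

open scoped Classical in
lemma IsGaussWord.step_eq (hw : IsGaussWord c w) (x : Fin c → Bool) (b : Fin (2*c)) :
    step c w x b = if passedUnder c w x b then -1 else 1 := by
  classical
  obtain ⟨p, hp, hwp⟩ := hw.exists_ne b
  have hnext : IsWarpingCrossing c w x (next b) (w b) ↔ ¬ passedUnder c w x b := by
    rw [hw.isWarpingCrossing_next_self x hp hwp, hw.passedUnder_iff_not x hp hwp]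
  unfold step warpingDegree
  simp only [Finset.card_filter, Nat.cast_sum, Nat.cast_ite, Nat.cast_one, Nat.cast_zero]
  rw [← Finset.sum_sub_distrib, Finset.sum_eq_single (w b)]
  · rw [hnext, isWarpingCrossing_self]
    split_ifs <;> simp
  · intro i _ hi
    rw [isWarpingCrossing_next_of_ne x (Ne.symm hi)]
    simp
  · simp

lemma IsGaussWord.warpingDegree_eq_add (hw : IsGaussWord c w) {x : Fin c → Bool}
    (hx : ∀ j, passedUnder c w x j ↔ (j : ℕ) % 2 = 1) (b : Fin (2*c)) :
    (warpingDegree c w x b : ℤ) = warpingDegree c w x ⟨0, b.pos⟩ + (b : ℕ) % 2 :=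
  eq_add_mod_two_of_sub_eq (fun b => (warpingDegree c w x b : ℤ)) (fun b => by simpa only [step, hx] using hw.step_eq x b) b

lemma IsGaussWord.warpingDegree_eq_sub (hw : IsGaussWord c w) {x : Fin c → Bool}
    (hx : ∀ j, passedUnder c w x j ↔ (j : ℕ) % 2 = 0) (b : Fin (2*c)) :
    (warpingDegree c w x b : ℤ) = warpingDegree c w x ⟨0, b.pos⟩ - (b : ℕ) % 2 := by
  have hneg := eq_add_mod_two_of_sub_eq (fun b => -(warpingDegree c w x b : ℤ)) (fun b => by
    have := hw.step_eq x b
    simp only [step, hx] at this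
    split_ifs at this ⊢ <;> omega) b
  linarith

end GaussWord

/-- Property (iv) of the warping matrix: for a Gauss word satisfying the Gauss parity
condition there are exactly two alternating assignments; they are pointwise negations of
each other, and their warping degree sequences have the alternating forms
`(k, k+1, k, k+1, …, k+1)` and `(l, l-1, l, l-1, …, l-1)` with `k + l = c`. -/
theorem alternating_rows (c : ℕ) (hc : 1 ≤ c) (w : Fin (2*c) → Fin c)
    (hw : IsGaussWord c w)
    (hpar : ∀ j j' : Fin (2*c), j ≠ j' → w j = w j' → (j : ℕ) % 2 ≠ (j' : ℕ) % 2) :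
    ∃ x₀ x₁ : Fin c → Bool, x₀ ≠ x₁ ∧
      AltAssign c w x₀ ∧ AltAssign c w x₁ ∧
      (∀ x : Fin c → Bool, AltAssign c w x → x = x₀ ∨ x = x₁) ∧
      (x₁ = fun i => !(x₀ i)) ∧
      ∃ k l : ℕ, k + l = c ∧
        (∀ b : Fin (2*c), (warpingDegree c w x₀ b : ℤ) = k + (b : ℕ) % 2) ∧
        (∀ b : Fin (2*c), (warpingDegree c w x₁ b : ℤ) = l - (b : ℕ) % 2) := by
  obtain ⟨x₀, hx₀⟩ := hw.exists_passedUnder_iff (fun j => (j : ℕ) % 2 = 1)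
    fun j j' hne hjj' => by have := hpar j j' hne hjj'; omega
  have hx₁ : ∀ j, passedUnder c w (fun i => !x₀ i) j ↔ (j : ℕ) % 2 = 0 := fun j => by
    rw [passedUnder_not, hx₀]
    omega
  let o : Fin (2*c) := ⟨0, by omega⟩
  refine ⟨x₀, fun i => !x₀ i, fun h => ?_, fun j j' h => by rw [hx₀, hx₀, h],
    fun j j' h => by rw [hx₁, hx₁, h], fun x hx => ?_, rfl,
    warpingDegree c w x₀ o, warpingDegree c w (fun i => !x₀ i) o,
    hw.warpingDegree_add_warpingDegree_not x₀ o, hw.warpingDegree_eq_add hx₀,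
    hw.warpingDegree_eq_sub hx₁⟩
  · simpa using congrFun h ⟨0, hc⟩
  · have hpattern := hw.passedUnder_iff_of_altAssign hpar hx o
    by_cases ho : passedUnder c w x o
    · exact Or.inr (eq_of_passedUnder_iff hw.surjective fun j => by simp [hpattern j, ho, hx₁, o])
    · refine Or.inl (eq_of_passedUnder_iff hw.surjective fun j => ?_)
      simp only [hpattern j, ho, false_iff, hx₀, o]
      omega

end Warping
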